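/- Let (I,B) be a valid context and (I,B) →(d,e,f) (I′,B′) a 3DT-step. Then the external triples of (I′,B′) can be partitioned into a set of variables each of which satisfies the two block conditions of validity: its elements b,x,y lie in a common block (the source) and its elements a,c,z lie in a common block (the target) distinct from the source. -/

import Mathlib

/- ----------------------------------------------------------------------
  Common definitions for the formalization of
  "Sorting by Transpositions is Difficult" (Bulteau, Fertin, Rusu).

  Permutations of {0,…,n} are represented as functions ℕ → ℕ that are
  bijections of the set {0,…,n} (everything above n is irrelevant /
  fixed).
---------------------------------------------------------------------- -/

set_option autoImplicit false

/-- The transposition `τ_{i,j,k}`, as a function on `ℕ`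
(for `0 < i < j < k ≤ n` it is a permutation of `{0,…,n}`,
fixing everything `≥ k`). Here `q = k + i - j`. -/
def tau (i j k x : ℕ) : ℕ :=
  if x < i then x
  else if x < k + i - j then x + j - i
  else if x < k then x + j - k
  else x

/-- The inverse transposition `τ_{i,j,k}⁻¹ = τ_{i,k+i-j,k}`. -/
def tauInv (i j k x : ℕ) : ℕ := tau i (k + i - j) k x

def min3 (p q r : ℕ) : ℕ := min p (min q r)

def max3 (p q r : ℕ) : ℕ := max p (max q r)

/-- the middle value of three (pairwise distinct) values -/
def mid3 (p q r : ℕ) : ℕ := p + q + r - min3 p q r - max3 p q r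

/-- The triple of positions `(p,q,r)` is *well-ordered*:
one of `p<q<r`, `q<r<p`, `r<p<q` holds. -/
def WellOrdered3 (p q r : ℕ) : Prop :=
  (p < q ∧ q < r) ∨ (q < r ∧ r < p) ∨ (r < p ∧ p < q)

/-- The transposition `τ[a,b,c,ψ]` associated with a (well-ordered) triple
whose `ψ`-positions are `(p,q,r)`: it is `τ_{i,j,k}` for `(i,j,k)` the
sorted sequence of `(p,q,r)`. -/
def tauStep (p q r x : ℕ) : ℕ := tau (min3 p q r) (mid3 p q r) (max3 p q r) x

/-- the inverse of `τ[a,b,c,ψ]` -/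
def tauInvStep (p q r x : ℕ) : ℕ := tauInv (min3 p q r) (mid3 p q r) (max3 p q r) x

/-- the number of breakpoints `d_b(π)` of `π` as a permutation of `{0,…,n}`:
the number of `x ∈ {1,…,n}` such that `(x-1,x)` is not an adjacency,
i.e. `π x ≠ π (x-1) + 1`. -/
def db (n : ℕ) (π : ℕ → ℕ) : ℕ :=
  ((Finset.Icc 1 n).filter fun x => π x ≠ π (x - 1) + 1).card

/-- a triple `(i,j,k)` of integers coding a transposition of `{0,…,n}` -/
def IsTransp (n : ℕ) (t : ℕ × ℕ × ℕ) : Prop :=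
  0 < t.1 ∧ t.1 < t.2.1 ∧ t.2.1 < t.2.2 ∧ t.2.2 ≤ n

/-- `π` can be sorted by `m` transpositions:
there are transpositions `τ_1,…,τ_m` with `π ∘ τ_m ∘ ⋯ ∘ τ_1 = Id` on `{0,…,n}`.
(`d_t(π)` is the least such `m`.) -/
def SortsIn (n : ℕ) (π : ℕ → ℕ) (m : ℕ) : Prop :=
  ∃ L : List (ℕ × ℕ × ℕ), L.length = m ∧ (∀ t ∈ L, IsTransp n t) ∧
    ∀ x ≤ n, π (L.foldl (fun y t => tau t.1 t.2.1 t.2.2 y) x) = x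

/-- the three elements of an ordered triple, as a finite set -/
def trElems {α : Type*} [DecidableEq α] (t : α × α × α) : Finset α := {t.1, t.2.1, t.2.2}

/-- A 3DT-instance `I = ⟨Σ, T, ψ⟩` of span `n`: an alphabet `Sig`,
a set `T` of ordered triples partitioning `Sig`, and an injection
`ψ : Sig → {1,…,n}`. -/
structure TDT (α : Type*) [DecidableEq α] (n : ℕ) where
  Sig : Finset α
  T : Finset (α × α × α)
  psi : α → ℕ
  mem_T : ∀ t ∈ T, t.1 ∈ Sig ∧ t.2.1 ∈ Sig ∧ t.2.2 ∈ Sig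
  cover : ∀ σ ∈ Sig, ∃ t ∈ T, σ ∈ trElems t
  nodup_T : ∀ t ∈ T, t.1 ≠ t.2.1 ∧ t.1 ≠ t.2.2 ∧ t.2.1 ≠ t.2.2
  disj_T : ∀ t ∈ T, ∀ t' ∈ T, t ≠ t' → Disjoint (trElems t) (trElems t')
  psi_mem : ∀ σ ∈ Sig, psi σ ∈ Finset.Icc 1 n
  psi_inj : Set.InjOn psi ↑Sig

namespace TDT

variable {α : Type*} [DecidableEq α] {n : ℕ}

/-- the domain `L = ψ(Σ)` of a 3DT-instance -/
def dom (I : TDT α n) : Finset ℕ := I.Sig.image I.psi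

/-- a triple of `T` is well-ordered -/
def WellOrderedT (I : TDT α n) (t : α × α × α) : Prop :=
  WellOrdered3 (I.psi t.1) (I.psi t.2.1) (I.psi t.2.2)

/-- the transposition `τ[a,b,c,ψ]` associated with a well-ordered triple -/
def tauOf (I : TDT α n) (t : α × α × α) (x : ℕ) : ℕ :=
  tauStep (I.psi t.1) (I.psi t.2.1) (I.psi t.2.2) x

/-- the inverse of `τ[a,b,c,ψ]` -/
def tauOfInv (I : TDT α n) (t : α × α × α) (x : ℕ) : ℕ :=
  tauInvStep (I.psi t.1) (I.psi t.2.1) (I.psi t.2.2) x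

end TDT

/-- a *variable*: a pair of triples `[(a,b,c),(x,y,z)]` -/
abbrev Var (α : Type*) : Type _ := (α × α × α) × (α × α × α)

section Main

variable {α : Type*} [DecidableEq α]

/-- The 3DT-step `I →(a,b,c) I'` (only defined when `(a,b,c)` is a
well-ordered triple of `T`): the triple is removed and `ψ` is composed
with `τ[a,b,c,ψ]⁻¹`. -/
def StepT {n : ℕ} (t : α × α × α) (I I' : TDT α n) : Prop :=
  t ∈ I.T ∧ I.WellOrderedT t ∧
  I'.Sig = I.Sig \ trElems t ∧
  I'.T = I.T.erase t ∧
  ∀ σ ∈ I'.Sig, I'.psi σ = I.tauOfInv t (I.psi σ)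

/-- `I` is 3DT-collapsible: some sequence of 3DT-steps reduces it to the
empty instance. -/
def Collapsible {n : ℕ} (I : TDT α n) : Prop :=
  ∃ J : TDT α n,
    Relation.ReflTransGen (fun X Y => ∃ t, StepT t X Y) I J ∧ J.Sig = ∅ ∧ J.T = ∅

/-- `I ∼ π` : the 3DT-instance `I` (of span `n`) and the permutation `π` of
`{0,…,n}` are equivalent: `π 0 = 0`, `π v = π (v-1) + 1` for `v ∉ L`, and
`π v = π (succ_I⁻¹ v - 1) + 1` for `v ∈ L` (expressed triple by triple). -/
def EquivPerm {n : ℕ} (I : TDT α n) (π : ℕ → ℕ) : Prop :=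
  π 0 = 0 ∧
  (∀ v, 1 ≤ v → v ≤ n → v ∉ I.dom → π v = π (v - 1) + 1) ∧
  ∀ t ∈ I.T,
    π (I.psi t.2.1) = π (I.psi t.1 - 1) + 1 ∧
    π (I.psi t.2.2) = π (I.psi t.2.1 - 1) + 1 ∧
    π (I.psi t.1) = π (I.psi t.2.2 - 1) + 1

/-- `(s 1, …, s l)` is an `l`-block-decomposition of span `n` -/
def IsBlockDec (n l : ℕ) (s : ℕ → ℕ) : Prop :=
  s 1 = 0 ∧ (∀ h, 1 ≤ h → h < l → s h < s (h + 1)) ∧ s l < n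

/-- `t_h`: the right end of block `h` (`t_h = s_{h+1}` for `h < l`, `t_l = n`) -/
def tEnd (n l : ℕ) (s : ℕ → ℕ) (h : ℕ) : ℕ := if h = l then n else s (h + 1)

/-- position `p` lies in block `h`, i.e. `p ∈ {s_h + 1, …, t_h}` -/
def InBlock (n l : ℕ) (s : ℕ → ℕ) (h p : ℕ) : Prop := s h < p ∧ p ≤ tEnd n l s h

/-- a triple of `T` is *internal* (all three elements in one block) -/
def InternalT (n l : ℕ) (I : TDT α n) (s : ℕ → ℕ) (t : α × α × α) : Prop :=
  ∃ h, 1 ≤ h ∧ h ≤ l ∧ InBlock n l s h (I.psi t.1) ∧ InBlock n l s h (I.psi t.2.1) ∧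
    InBlock n l s h (I.psi t.2.2)

/-- block conditions (C2)–(C3) of a variable `[(a,b,c),(x,y,z)]`:
`b,x,y` lie in the source block `h0` and `a,c,z` lie in the target block
`h1 ≠ h0`. -/
def VarBlocksAt (n l : ℕ) (I : TDT α n) (s : ℕ → ℕ) (h0 h1 : ℕ) (a b c x y z : α) : Prop :=
  (a, b, c) ∈ I.T ∧ (x, y, z) ∈ I.T ∧
  1 ≤ h0 ∧ h0 ≤ l ∧ 1 ≤ h1 ∧ h1 ≤ l ∧ h1 ≠ h0 ∧
  InBlock n l s h0 (I.psi b) ∧ InBlock n l s h0 (I.psi x) ∧ InBlock n l s h0 (I.psi y) ∧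
  InBlock n l s h1 (I.psi a) ∧ InBlock n l s h1 (I.psi c) ∧ InBlock n l s h1 (I.psi z)

/-- the variable `[(a,b,c),(x,y,z)]` is *valid*, with source `h0` and target `h1`:
conditions (C2)–(C5). -/
def ValidVarAt (n l : ℕ) (I : TDT α n) (s : ℕ → ℕ) (h0 h1 : ℕ) (a b c x y z : α) : Prop :=
  VarBlocksAt n l I s h0 h1 a b c x y z ∧
  (I.psi x < I.psi y →
    I.psi x < I.psi b ∧ I.psi b < I.psi y ∧
      ∀ σ ∈ I.Sig, I.psi x < I.psi σ → I.psi σ < I.psi y → σ = b) ∧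
  I.psi a < I.psi z ∧ I.psi z < I.psi c

/-- the variable `[(a,b,c),(x,y,z)]` is valid in the block decomposition `s` -/
def ValidVar (n l : ℕ) (I : TDT α n) (s : ℕ → ℕ) (a b c x y z : α) : Prop :=
  ∃ h0 h1, ValidVarAt n l I s h0 h1 a b c x y z

/-- validity of a variable given as a pair of triples -/
def ValidVarV (n l : ℕ) (I : TDT α n) (s : ℕ → ℕ) (V : Var α) : Prop :=
  ValidVar n l I s V.1.1 V.1.2.1 V.1.2.2 V.2.1 V.2.2.1 V.2.2.2

/-- conditions (C2)–(C3) only, of a variable given as a pair of triples -/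
def VarC23V (n l : ℕ) (I : TDT α n) (s : ℕ → ℕ) (V : Var α) : Prop :=
  ∃ h0 h1, VarBlocksAt n l I s h0 h1 V.1.1 V.1.2.1 V.1.2.2 V.2.1 V.2.2.1 V.2.2.2

/-- the external triples of `(I,s)` are partitioned into the set `𝒜` of
variables, each satisfying the property `P`. -/
def PartitionIntoVars (n l : ℕ) (I : TDT α n) (s : ℕ → ℕ) (P : Var α → Prop)
    (𝒜 : Finset (Var α)) : Prop :=
  (∀ V ∈ 𝒜, P V) ∧
  (∀ V ∈ 𝒜, V.1 ≠ V.2) ∧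
  (∀ V ∈ 𝒜, ∀ W ∈ 𝒜, V ≠ W → V.1 ≠ W.1 ∧ V.1 ≠ W.2 ∧ V.2 ≠ W.1 ∧ V.2 ≠ W.2) ∧
  (∀ V ∈ 𝒜, ¬ InternalT n l I s V.1 ∧ ¬ InternalT n l I s V.2) ∧
  ∀ t ∈ I.T, ¬ InternalT n l I s t → ∃ V ∈ 𝒜, t = V.1 ∨ t = V.2

/-- `(I,s)` is a *valid context* -/
def ValidContext (n l : ℕ) (I : TDT α n) (s : ℕ → ℕ) : Prop :=
  IsBlockDec n l s ∧ ∃ 𝒜, PartitionIntoVars n l I s (ValidVarV n l I s) 𝒜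

/-- a 3DT-step on an instance together with an `l`-block-decomposition:
`(I,B) →(t) (I',B')` with `B' = τ⁻¹[B]`. -/
def StepB (n l : ℕ) (t : α × α × α) (P P' : TDT α n × (ℕ → ℕ)) : Prop :=
  StepT t P.1 P'.1 ∧ IsBlockDec n l P'.2 ∧
  ∀ h, 1 ≤ h → h ≤ l → P'.2 h = P.1.tauOfInv t (P.2 h)

/-- From the state `st`, the triple `v` (of some variable) can be activated,
possibly after some 3DT-steps using only the internal triples in `ints`. -/
def CanActivate (n l : ℕ) (ints : Set (α × α × α)) (v : α × α × α)
    (st : TDT α n × (ℕ → ℕ)) : Prop :=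
  ∃ (m : ℕ) (c : ℕ → TDT α n × (ℕ → ℕ)) (tr : ℕ → α × α × α),
    c 0 = st ∧ (∀ p ≤ m, StepB n l (tr p) (c p) (c (p + 1))) ∧
    (∀ p < m, tr p ∈ ints) ∧ tr m = v

/-- the block `h` of `(I,s)` reads (in increasing `ψ`-order) exactly as the
word `w`. -/
def BlockWord (n l : ℕ) (I : TDT α n) (s : ℕ → ℕ) (h : ℕ) (w : List α) : Prop :=
  w.Chain' (fun u v => I.psi u < I.psi v) ∧
  (∀ σ ∈ w, σ ∈ I.Sig ∧ InBlock n l s h (I.psi σ)) ∧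
  ∀ σ ∈ I.Sig, InBlock n l s h (I.psi σ) → σ ∈ w

/-- the block `h` is the block `[A1,A2] = copy(A)`,
with word `a y1 e z d y2 x1 b1 c x2 b2 f`. -/
def IsCopyBlock (n l : ℕ) (I : TDT α n) (s : ℕ → ℕ) (h : ℕ) (A A1 A2 : Var α)
    (d e f : α) : Prop :=
  (d, e, f) ∈ I.T ∧
  BlockWord n l I s h
    [A.1.1, A1.2.2.1, e, A.2.2.2, d, A2.2.2.1, A1.2.1, A1.1.2.1, A.1.2.2, A2.2.1, A2.1.2.1, f]

/-- the block `h` is the block `A = and(A1,A2)`,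
with word `a1 e z1 a2 c1 z2 d y c2 x b f`. -/
def IsAndBlock (n l : ℕ) (I : TDT α n) (s : ℕ → ℕ) (h : ℕ) (A1 A2 A : Var α)
    (d e f : α) : Prop :=
  (d, e, f) ∈ I.T ∧
  BlockWord n l I s h
    [A1.1.1, e, A1.2.2.2, A2.1.1, A1.1.2.2, A2.2.2.2, d, A.2.2.1, A2.1.2.2, A.2.1, A.1.2.1, f]

/-- the block `h` is the block `A = or(A1,A2)`,
with word `a1 b' z1 a2 d y a' x b f z2 c1 e c' c2`. -/
def IsOrBlock (n l : ℕ) (I : TDT α n) (s : ℕ → ℕ) (h : ℕ) (A1 A2 A : Var α)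
    (a' b' c' d e f : α) : Prop :=
  (a', b', c') ∈ I.T ∧ (d, e, f) ∈ I.T ∧
  BlockWord n l I s h
    [A1.1.1, b', A1.2.2.2, A2.1.1, d, A.2.2.1, a', A.2.1, A.1.2.1, f, A2.2.2.2, A1.1.2.2, e,
      c', A2.1.2.2]

/-- the block `h` is the block `[A1,A2] = var(A)`,
with word `d1 y1 a d2 y2 e1 a' e2 x1 b1 f1 c' z b' c x2 b2 f2`. -/
def IsVarBlock (n l : ℕ) (I : TDT α n) (s : ℕ → ℕ) (h : ℕ) (A A1 A2 : Var α)
    (d1 e1 f1 d2 e2 f2 a' b' c' : α) : Prop :=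
  (d1, e1, f1) ∈ I.T ∧ (d2, e2, f2) ∈ I.T ∧ (a', b', c') ∈ I.T ∧
  BlockWord n l I s h
    [d1, A1.2.2.1, A.1.1, d2, A2.2.2.1, e1, a', e2, A1.2.1, A1.1.2.1, f1, c', A.2.2.2, b',
      A.1.2.2, A2.2.1, A2.1.2.1, f2]

/-- `(I,s)` is an *assembling of basic blocks* over the set `𝒜` of variables:
the word representation of `I` is a concatenation of `l` blocks, each of one
of the four kinds `copy`, `and`, `or`, `var`; each variable is the input of
exactly one block and the output of exactly one other block, and `T`
consists of the internal triples of the blocks together with the triples of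
the variables. -/
def IsAssembling (n l : ℕ) (I : TDT α n) (s : ℕ → ℕ) (𝒜 : Finset (Var α)) : Prop :=
  IsBlockDec n l s ∧
  (∀ V ∈ 𝒜, V.1 ∈ I.T ∧ V.2 ∈ I.T ∧ V.1 ≠ V.2) ∧
  (∀ V ∈ 𝒜, ∀ W ∈ 𝒜, V ≠ W → V.1 ≠ W.1 ∧ V.1 ≠ W.2 ∧ V.2 ≠ W.1 ∧ V.2 ≠ W.2) ∧
  (∀ V ∈ 𝒜, ∃ h0 h1, VarBlocksAt n l I s h0 h1 V.1.1 V.1.2.1 V.1.2.2 V.2.1 V.2.2.1 V.2.2.2) ∧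
  (∀ t ∈ I.T, InternalT n l I s t ∨ ∃ V ∈ 𝒜, t = V.1 ∨ t = V.2) ∧
  ∀ h, 1 ≤ h → h ≤ l →
    (∃ A ∈ 𝒜, ∃ A1 ∈ 𝒜, ∃ A2 ∈ 𝒜, ∃ d e f : α, IsCopyBlock n l I s h A A1 A2 d e f) ∨
    (∃ A ∈ 𝒜, ∃ A1 ∈ 𝒜, ∃ A2 ∈ 𝒜, ∃ d e f : α, IsAndBlock n l I s h A1 A2 A d e f) ∨
    (∃ A ∈ 𝒜, ∃ A1 ∈ 𝒜, ∃ A2 ∈ 𝒜, ∃ a' b' c' d e f : α,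
      IsOrBlock n l I s h A1 A2 A a' b' c' d e f) ∨
    (∃ A ∈ 𝒜, ∃ A1 ∈ 𝒜, ∃ A2 ∈ 𝒜, ∃ d1 e1 f1 d2 e2 f2 a' b' c' : α,
      IsVarBlock n l I s h A A1 A2 d1 e1 f1 d2 e2 f2 a' b' c')

end Main

/-- satisfiability of a boolean formula in CNF (clauses are lists of
literals; a literal is a pair (variable index, sign)) -/
def CNFSat (m : ℕ) (φ : List (List (Fin m × Bool))) : Prop :=
  ∃ v : Fin m → Bool, ∀ C ∈ φ, ∃ p ∈ C, v p.1 = p.2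

/-!
The step map `τ⁻¹` is strictly monotone away from the segment it rotates. If `(d,e,f)` lies
in one block, that segment is inside the block and all block boundaries are fixed, so every
letter stays in its block and the same variables still partition the external triples.
Otherwise `(d,e,f)` belongs to a valid variable `[(a,b,c),(x,y,z)]`; it cannot be `(a,b,c)`,
whose middle letter lies outside the block containing `a` and `c`, so it is `(x,y,z)` with
`x ≺ y`. Only `b` lies strictly between `x` and `y`, hence every other letter keeps its block,
while `b` lands between `a` and `c`: the triple `(a,b,c)` becomes internal and the remaining
variables form the required partition.
-/

open Finset

section Transposition

variable {p q r x : ℕ}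

lemma tauInvStep_eq_self (hx : x < min3 p q r ∨ max3 p q r ≤ x) : tauInvStep p q r x = x := by
  unfold tauInvStep tauInv tau mid3 min3 max3 at *
  split_ifs <;> omega

lemma tauInvStep_mem_Ico (hx : min3 p q r ≤ x) (hx' : x < max3 p q r) :
    min3 p q r ≤ tauInvStep p q r x ∧ tauInvStep p q r x < max3 p q r := by
  unfold tauInvStep tauInv tau mid3 min3 max3 at *
  split_ifs <;> omega

lemma strictMonoOn_tauInvStep (hpq : p < q) :
    StrictMonoOn (tauInvStep p q r) {x | x < p ∨ q ≤ x} := by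
  intro u (hu : u < p ∨ q ≤ u) v (hv : v < p ∨ q ≤ v) huv
  unfold tauInvStep tauInv tau mid3 min3 max3
  split_ifs <;> omega

end Transposition

section Blocks

variable {n l : ℕ} {s s' : ℕ → ℕ} {g h p q r : ℕ}

lemma IsBlockDec.monotone (hs : IsBlockDec n l s) (hg : 1 ≤ g) (hgh : g ≤ h) (hh : h ≤ l) :
    s g ≤ s h := by
  induction h, hgh using Nat.le_induction with
  | base => exact le_rfl
  | succ h hgh ih => exact (ih (by omega)).trans (hs.2.1 h (by omega) (by omega)).le

lemma tEnd_of_lt (hh : h < l) : tEnd n l s h = s (h + 1) := if_neg hh.ne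

lemma IsBlockDec.tEnd_le (hs : IsBlockDec n l s) (hh : 1 ≤ h) (hl : h ≤ l) : tEnd n l s h ≤ n := by
  unfold tEnd
  split_ifs with hhl
  · exact le_rfl
  · exact (hs.monotone (by omega) (by omega) le_rfl).trans hs.2.2.le

lemma InBlock.of_le_of_le (hp : InBlock n l s h p) (hq : InBlock n l s h q) (hpr : p ≤ r)
    (hrq : r ≤ q) : InBlock n l s h r :=
  ⟨hp.1.trans_le hpr, hrq.trans hq.2⟩

lemma inBlock_congr (hss : ∀ h, 1 ≤ h → h ≤ l → s' h = s h) (hh : 1 ≤ h) (hl : h ≤ l) :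
    InBlock n l s' h p ↔ InBlock n l s h p := by
  unfold InBlock tEnd
  split_ifs with hhl
  · rw [hss h hh hl]
  · rw [hss h hh hl, hss (h + 1) (by omega) (by omega)]

lemma IsBlockDec.lt_of_inBlock_of_lt (hs : IsBlockDec n l s) (hg : 1 ≤ g) (hgh : g < h)
    (hh : h ≤ l) (hp : InBlock n l s g p) (hq : InBlock n l s h q) : p < q := by
  have hmono := hs.monotone (g := g + 1) (by omega) hgh hh
  have hpt := hp.2
  rw [tEnd_of_lt (by omega)] at hpt
  exact hpt.trans_lt (hmono.trans_lt hq.1)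

lemma IsBlockDec.eq_of_inBlock (hs : IsBlockDec n l s) (hg : 1 ≤ g) (hgl : g ≤ l) (hh : 1 ≤ h)
    (hhl : h ≤ l) (hpg : InBlock n l s g p) (hph : InBlock n l s h p) : g = h := by
  rcases lt_trichotomy g h with hgh | hgh | hhg
  · exact absurd (hs.lt_of_inBlock_of_lt hg hgh hhl hpg hph) (lt_irrefl p)
  · exact hgh
  · exact absurd (hs.lt_of_inBlock_of_lt hh hhg hgl hph hpg) (lt_irrefl p)

lemma IsBlockDec.inBlock_iff_of_inBlock (hs : IsBlockDec n l s) (hg : 1 ≤ g) (hgl : g ≤ l)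
    (hp : InBlock n l s g p) (hq : InBlock n l s g q) (hh : 1 ≤ h) (hhl : h ≤ l) :
    InBlock n l s h p ↔ InBlock n l s h q := by
  constructor
  · intro hph
    rwa [← hs.eq_of_inBlock hg hgl hh hhl hp hph]
  · intro hqh
    rwa [← hs.eq_of_inBlock hg hgl hh hhl hq hqh]

lemma IsBlockDec.lt_of_inBlock_of_ne (hs : IsBlockDec n l s) (hg : 1 ≤ g) (hgl : g ≤ l)
    (hh : 1 ≤ h) (hhl : h ≤ l) (hgh : g ≠ h) (hp : InBlock n l s g p) (hq : InBlock n l s h q)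
    (hpq : p < q) {p' q' : ℕ} (hp' : InBlock n l s g p') (hq' : InBlock n l s h q') : p' < q' := by
  rcases lt_or_gt_of_ne hgh with hlt | hlt
  · exact hs.lt_of_inBlock_of_lt hg hlt hhl hp' hq'
  · exact absurd (hs.lt_of_inBlock_of_lt hh hlt hgl hq hp) hpq.not_gt

lemma IsBlockDec.lt_or_le_of_inBlock (hs : IsBlockDec n l s) (hg : 1 ≤ g) (hgl : g ≤ l)
    (hp : InBlock n l s g p) (hq : InBlock n l s g q) (hh : 1 ≤ h) (hhl : h ≤ l) :
    s h < p ∨ q ≤ s h := by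
  rcases le_or_gt h g with hhg | hgh
  · exact Or.inl ((hs.monotone hh hhg hgl).trans_lt hp.1)
  · have hqt := hq.2
    rw [tEnd_of_lt (by omega)] at hqt
    exact Or.inr (hqt.trans (hs.monotone (by omega) hgh hhl))

lemma inBlock_iff_inBlock_map {φ : ℕ → ℕ} {E : Set ℕ} (hφ : StrictMonoOn φ E)
    (hs' : ∀ h, 1 ≤ h → h ≤ l → s' h = φ (s h)) (hsE : ∀ h, 1 ≤ h → h ≤ l → s h ∈ E)
    (hnE : n ∈ E) (hφn : φ n = n) (hh : 1 ≤ h) (hhl : h ≤ l) (hp : p ∈ E) :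
    InBlock n l s h p ↔ InBlock n l s' h (φ p) := by
  have htE : tEnd n l s h ∈ E := by
    unfold tEnd
    split_ifs with hl
    · exact hnE
    · exact hsE (h + 1) (by omega) (by omega)
  have ht' : tEnd n l s' h = φ (tEnd n l s h) := by
    unfold tEnd
    split_ifs with hl
    · exact hφn.symm
    · exact hs' (h + 1) (by omega) (by omega)
  rw [InBlock, InBlock, ht', hs' h hh hhl, hφ.lt_iff_lt (hsE h hh hhl) hp, hφ.le_iff_le hp htE]

end Blocks

section Partition

variable {α : Type*} [DecidableEq α] {n l : ℕ}

lemma TDT.mem_Sig_of_mem_trElems (I : TDT α n) {t : α × α × α} (ht : t ∈ I.T) {σ : α}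
    (hσ : σ ∈ trElems t) : σ ∈ I.Sig := by
  obtain ⟨h1, h2, h3⟩ := I.mem_T t ht
  simp only [trElems, mem_insert, mem_singleton] at hσ
  rcases hσ with rfl | rfl | rfl <;> assumption

lemma TDT.tauOfInv_span (I : TDT α n) {t : α × α × α} (ht : t ∈ I.T) : I.tauOfInv t n = n := by
  have hle : ∀ σ ∈ trElems t, I.psi σ ≤ n := fun σ hσ =>
    (mem_Icc.1 (I.psi_mem σ (I.mem_Sig_of_mem_trElems ht hσ))).2
  have h1 := hle t.1 (by simp [trElems])
  have h2 := hle t.2.1 (by simp [trElems])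
  have h3 := hle t.2.2 (by simp [trElems])
  exact tauInvStep_eq_self (Or.inr (by unfold max3; omega))

def KeepsBlock (n l : ℕ) (I I' : TDT α n) (s s' : ℕ → ℕ) (σ : α) : Prop :=
  ∀ h, 1 ≤ h → h ≤ l → (InBlock n l s h (I.psi σ) ↔ InBlock n l s' h (I'.psi σ))

variable {I I' : TDT α n} {s s' : ℕ → ℕ}

lemma internalT_iff_of_keepsBlock {t : α × α × α}
    (hk : ∀ σ ∈ trElems t, KeepsBlock n l I I' s s' σ) :
    InternalT n l I s t ↔ InternalT n l I' s' t := by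
  have k1 := hk t.1 (by simp [trElems])
  have k2 := hk t.2.1 (by simp [trElems])
  have k3 := hk t.2.2 (by simp [trElems])
  exact exists_congr fun h => and_congr_right fun h1 => and_congr_right fun hl =>
    and_congr (k1 h h1 hl) (and_congr (k2 h h1 hl) (k3 h h1 hl))

lemma VarC23V.of_keepsBlock {V : Var α} (hV : VarC23V n l I s V) (h1 : V.1 ∈ I'.T)
    (h2 : V.2 ∈ I'.T) (hk1 : ∀ σ ∈ trElems V.1, KeepsBlock n l I I' s s' σ)
    (hk2 : ∀ σ ∈ trElems V.2, KeepsBlock n l I I' s s' σ) : VarC23V n l I' s' V := by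
  obtain ⟨g, g', -, -, hg, hgl, hg', hg'l, hne, hb, hx, hy, ha, hc, hz⟩ := hV
  exact ⟨g, g', h1, h2, hg, hgl, hg', hg'l, hne,
    (hk1 _ (by simp [trElems]) g hg hgl).1 hb, (hk2 _ (by simp [trElems]) g hg hgl).1 hx,
    (hk2 _ (by simp [trElems]) g hg hgl).1 hy, (hk1 _ (by simp [trElems]) g' hg' hg'l).1 ha,
    (hk1 _ (by simp [trElems]) g' hg' hg'l).1 hc, (hk2 _ (by simp [trElems]) g' hg' hg'l).1 hz⟩

lemma ValidVarV.varC23V {V : Var α} (hV : ValidVarV n l I s V) : VarC23V n l I s V :=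
  let ⟨g, g', hblocks, _⟩ := hV
  ⟨g, g', hblocks⟩

lemma PartitionIntoVars.imp {P Q : Var α → Prop} {𝒜 : Finset (Var α)} (hPQ : ∀ V, P V → Q V)
    (h𝒜 : PartitionIntoVars n l I s P 𝒜) : PartitionIntoVars n l I s Q 𝒜 :=
  ⟨fun V hV => hPQ V (h𝒜.1 V hV), h𝒜.2⟩

lemma PartitionIntoVars.transport {𝒜 𝒜' : Finset (Var α)}
    (h𝒜 : PartitionIntoVars n l I s (VarC23V n l I s) 𝒜) (hsub : 𝒜' ⊆ 𝒜) (hT : I'.T ⊆ I.T)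
    (hmem : ∀ V ∈ 𝒜', V.1 ∈ I'.T ∧ V.2 ∈ I'.T)
    (hkeep : ∀ t ∈ I'.T, (∀ σ ∈ trElems t, KeepsBlock n l I I' s s' σ) ∨
      (InternalT n l I' s' t ∧ ∀ V ∈ 𝒜', t ≠ V.1 ∧ t ≠ V.2))
    (hdrop : ∀ V ∈ 𝒜, V ∉ 𝒜' → ∀ t ∈ I'.T, t = V.1 ∨ t = V.2 → InternalT n l I' s' t) :
    PartitionIntoVars n l I' s' (VarC23V n l I' s') 𝒜' := by
  obtain ⟨hP, hne, hdist, hext, hcov⟩ := h𝒜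
  have hkeepV : ∀ V ∈ 𝒜', (∀ σ ∈ trElems V.1, KeepsBlock n l I I' s s' σ) ∧
      (∀ σ ∈ trElems V.2, KeepsBlock n l I I' s s' σ) := fun V hV =>
    ⟨(hkeep V.1 (hmem V hV).1).resolve_right fun h => (h.2 V hV).1 rfl,
      (hkeep V.2 (hmem V hV).2).resolve_right fun h => (h.2 V hV).2 rfl⟩
  refine ⟨fun V hV => (hP V (hsub hV)).of_keepsBlock (hmem V hV).1 (hmem V hV).2
      (hkeepV V hV).1 (hkeepV V hV).2, fun V hV => hne V (hsub hV),
    fun V hV W hW => hdist V (hsub hV) W (hsub hW), fun V hV => ?_, fun t ht hint => ?_⟩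
  · rw [← internalT_iff_of_keepsBlock (hkeepV V hV).1,
      ← internalT_iff_of_keepsBlock (hkeepV V hV).2]
    exact hext V (hsub hV)
  · have hk := (hkeep t ht).resolve_right fun h => hint h.1
    obtain ⟨V, hV, htV⟩ := hcov t (hT ht) (by rwa [internalT_iff_of_keepsBlock hk])
    by_cases hV' : V ∈ 𝒜'
    · exact ⟨V, hV', htV⟩
    · exact absurd (hdrop V hV hV' t ht htV) hint

end Partition

section Step

variable {α : Type*} [DecidableEq α] {n l : ℕ} {I I' : TDT α n} {s s' : ℕ → ℕ}
  {t : α × α × α}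

/-- An internal step rotates positions inside one block and fixes every block boundary. -/
lemma keepsBlock_of_internal_step (hs : IsBlockDec n l s) (hstep : StepB n l t (I, s) (I', s'))
    (hint : InternalT n l I s t) {σ : α} (hσ : σ ∈ I'.Sig) : KeepsBlock n l I I' s s' σ := by
  obtain ⟨⟨-, -, -, -, hpsi⟩, -, hs'⟩ := hstep
  dsimp only at hpsi hs'
  obtain ⟨g, hg, hgl, h1, h2, h3⟩ := hint
  set i := min3 (I.psi t.1) (I.psi t.2.1) (I.psi t.2.2)
  set k := max3 (I.psi t.1) (I.psi t.2.1) (I.psi t.2.2)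
  have hi : InBlock n l s g i := by simp only [i, InBlock, min3] at *; omega
  have hk : InBlock n l s g k := by simp only [k, InBlock, max3] at *; omega
  have hss : ∀ h, 1 ≤ h → h ≤ l → s' h = s h := fun h hh hhl => by
    rw [hs' h hh hhl]
    exact tauInvStep_eq_self (hs.lt_or_le_of_inBlock hg hgl hi hk hh hhl)
  intro h hh hhl
  rw [hpsi σ hσ, inBlock_congr hss hh hhl]
  by_cases hout : I.psi σ < i ∨ k ≤ I.psi σ
  · rw [TDT.tauOfInv, tauInvStep_eq_self hout]
  · rw [not_or, not_lt, not_le] at hout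
    obtain ⟨hlo, hhi⟩ := tauInvStep_mem_Ico hout.1 hout.2
    exact hs.inBlock_iff_of_inBlock hg hgl (hi.of_le_of_le hk hout.1 hout.2.le)
      (hi.of_le_of_le hk hlo hhi.le) hh hhl

lemma partitionIntoVars_of_internal_step (hs : IsBlockDec n l s) {𝒜 : Finset (Var α)}
    (h𝒜 : PartitionIntoVars n l I s (VarC23V n l I s) 𝒜) (hstep : StepB n l t (I, s) (I', s'))
    (hint : InternalT n l I s t) : PartitionIntoVars n l I' s' (VarC23V n l I' s') 𝒜 := by
  have hT : I'.T = I.T.erase t := hstep.1.2.2.2.1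
  have hmem : ∀ u ∈ I.T, ¬ InternalT n l I s u → u ∈ I'.T := fun u hu hext => by
    rw [hT]
    exact mem_erase.2 ⟨fun hut => hext (hut ▸ hint), hu⟩
  refine h𝒜.transport subset_rfl (hT ▸ erase_subset _ _) (fun V hV => ?_)
    (fun u hu => Or.inl fun σ hσ =>
      keepsBlock_of_internal_step hs hstep hint (I'.mem_Sig_of_mem_trElems hu hσ))
    (fun V hV hV' => absurd hV hV')
  obtain ⟨-, -, hV1, hV2, -⟩ := h𝒜.1 V hV
  exact ⟨hmem _ hV1 (h𝒜.2.2.2.1 V hV).1, hmem _ hV2 (h𝒜.2.2.2.1 V hV).2⟩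

section ValidVarAt

variable {h0 h1 : ℕ} {a b c x y z : α}

lemma ValidVarAt.not_wellOrdered_fst (hs : IsBlockDec n l s)
    (hV : ValidVarAt n l I s h0 h1 a b c x y z) :
    ¬ WellOrdered3 (I.psi a) (I.psi b) (I.psi c) := by
  obtain ⟨⟨-, -, h01, h0l, h11, h1l, hne, hb, -, -, ha, hc, -⟩, -, haz, hzc⟩ := hV
  rintro (⟨hab, hbc⟩ | ⟨hbc, hca⟩ | ⟨hca, hab⟩)
  · exact (hs.lt_of_inBlock_of_ne h11 h1l h01 h0l hne ha hb hab hc hb).not_gt hbc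
  · omega
  · omega

lemma ValidVarAt.psi_lt_of_wellOrdered (hs : IsBlockDec n l s)
    (hV : ValidVarAt n l I s h0 h1 a b c x y z)
    (hwo : WellOrdered3 (I.psi x) (I.psi y) (I.psi z)) : I.psi x < I.psi y := by
  obtain ⟨⟨-, -, h01, h0l, h11, h1l, hne, -, hx, hy, -, -, hz⟩, -⟩ := hV
  rcases hwo with ⟨hxy, -⟩ | ⟨hyz, hzx⟩ | ⟨-, hxy⟩
  · exact hxy
  · exact absurd (hs.lt_of_inBlock_of_ne h01 h0l h11 h1l hne.symm hy hz hyz hx hz) hzx.not_gt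
  · exact hxy

/-- Only `b` sits strictly between `x` and `y`, and `x` disappears with the step. -/
lemma ValidVarAt.psi_lt_or_le_of_step (hV : ValidVarAt n l I s h0 h1 a b c x y z)
    (hstep : StepB n l (x, y, z) (I, s) (I', s')) (hxy : I.psi x < I.psi y) {σ : α}
    (hσ : σ ∈ I'.Sig) (hσb : σ ≠ b) : I.psi σ < I.psi x ∨ I.psi y ≤ I.psi σ := by
  obtain ⟨⟨hxyz, -, hSig, -, -⟩, -, -⟩ := hstep
  rw [hSig, mem_sdiff] at hσ
  obtain ⟨-, -, huniq⟩ := hV.2.1 hxy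
  have hσx : I.psi σ ≠ I.psi x := fun heq => hσ.2 <| by
    rw [I.psi_inj hσ.1 (I.mem_Sig_of_mem_trElems hxyz (by simp [trElems])) heq]
    simp [trElems]
  by_contra hin
  rw [not_or, not_lt, not_le] at hin
  exact hσb (huniq σ hσ.1 (lt_of_le_of_ne hin.1 hσx.symm) hin.2)

lemma ValidVarAt.keepsBlock_of_step (hs : IsBlockDec n l s)
    (hV : ValidVarAt n l I s h0 h1 a b c x y z) (hstep : StepB n l (x, y, z) (I, s) (I', s'))
    {σ : α} (hσ : σ ∈ I'.Sig) (hσb : σ ≠ b) : KeepsBlock n l I I' s s' σ := by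
  obtain ⟨⟨hxyz, hwo, -, -, hpsi⟩, -, hs'⟩ := id hstep
  dsimp only at hpsi hs'
  have hxy := hV.psi_lt_of_wellOrdered hs hwo
  have hout := hV.psi_lt_or_le_of_step hstep hxy hσ hσb
  obtain ⟨⟨-, -, h01, h0l, -, -, -, -, hx, hy, -⟩, -⟩ := hV
  intro h hh hhl
  rw [hpsi σ hσ]
  exact inBlock_iff_inBlock_map (strictMonoOn_tauInvStep hxy) hs'
    (fun h hh hhl => hs.lt_or_le_of_inBlock h01 h0l hx hy hh hhl)
    (Or.inr (hy.2.trans (hs.tEnd_le h01 h0l))) (I.tauOfInv_span hxyz) hh hhl hout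

lemma ValidVarAt.tauOfInv_between (hs : IsBlockDec n l s)
    (hV : ValidVarAt n l I s h0 h1 a b c x y z)
    (hwo : WellOrdered3 (I.psi x) (I.psi y) (I.psi z)) :
    I.tauOfInv (x, y, z) (I.psi a) < I.tauOfInv (x, y, z) (I.psi b) ∧
      I.tauOfInv (x, y, z) (I.psi b) < I.tauOfInv (x, y, z) (I.psi c) := by
  have hxy := hV.psi_lt_of_wellOrdered hs hwo
  obtain ⟨⟨-, -, h01, h0l, h11, h1l, hne, -, hx, hy, ha, hc, hz⟩, hC4, haz, hzc⟩ := hV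
  obtain ⟨hxb, hby, -⟩ := hC4 hxy
  unfold TDT.tauOfInv tauInvStep tauInv tau mid3 min3 max3
  dsimp only
  rcases hwo with ⟨-, hyz⟩ | ⟨hyz, hzx⟩ | ⟨hzx, -⟩
  · have hya := hs.lt_of_inBlock_of_ne h01 h0l h11 h1l hne.symm hy hz hyz hy ha
    split_ifs <;> omega
  · omega
  · have hcx := hs.lt_of_inBlock_of_ne h11 h1l h01 h0l hne hz hx hzx hc hx
    split_ifs <;> omega

lemma ValidVarAt.internalT_of_step (hs : IsBlockDec n l s)
    (hV : ValidVarAt n l I s h0 h1 a b c x y z) (hstep : StepB n l (x, y, z) (I, s) (I', s')) :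
    InternalT n l I' s' (a, b, c) := by
  obtain ⟨⟨hxyz, hwo, hSig, -, hpsi⟩, -, -⟩ := id hstep
  dsimp only at hpsi
  obtain ⟨hlt1, hlt2⟩ := hV.tauOfInv_between hs hwo
  have hkeep := fun σ => hV.keepsBlock_of_step hs hstep (σ := σ)
  obtain ⟨⟨habc, -, h01, h0l, h11, h1l, hne, -, hx, -, ha, hc, -⟩, -⟩ := hV
  have hdisj : Disjoint (trElems (a, b, c)) (trElems (x, y, z)) := I.disj_T _ habc _ hxyz
    fun heq => hne (hs.eq_of_inBlock h11 h1l h01 h0l ha (by rwa [(Prod.mk.inj heq).1]))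
  have hmem : ∀ σ ∈ trElems (a, b, c), σ ∈ I'.Sig := fun σ hσ => by
    rw [hSig, mem_sdiff]
    exact ⟨I.mem_Sig_of_mem_trElems habc hσ, disjoint_left.1 hdisj hσ⟩
  have haS := hmem a (by simp [trElems])
  have hbS := hmem b (by simp [trElems])
  have hcS := hmem c (by simp [trElems])
  obtain ⟨hab, -, hbc⟩ := I.nodup_T _ habc
  have ha' := (hkeep a haS hab h1 h11 h1l).1 ha
  have hc' := (hkeep c hcS hbc.symm h1 h11 h1l).1 hc
  refine ⟨h1, h11, h1l, ha', ?_, hc'⟩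
  rw [hpsi a haS] at ha'
  rw [hpsi c hcS] at hc'
  rw [hpsi b hbS]
  exact ha'.of_le_of_le hc' hlt1.le hlt2.le

end ValidVarAt

lemma partitionIntoVars_erase_of_step (hs : IsBlockDec n l s) {𝒜 : Finset (Var α)}
    (h𝒜 : PartitionIntoVars n l I s (ValidVarV n l I s) 𝒜) {V : Var α} (hV : V ∈ 𝒜)
    (htV : t = V.1 ∨ t = V.2) (hstep : StepB n l t (I, s) (I', s')) :
    PartitionIntoVars n l I' s' (VarC23V n l I' s') (𝒜.erase V) := by
  obtain ⟨⟨a, b, c⟩, x, y, z⟩ := V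
  obtain ⟨h0, h1, hval⟩ := h𝒜.1 _ hV
  obtain rfl : t = (x, y, z) := htV.resolve_left fun htV =>
    hval.not_wellOrdered_fst hs (htV ▸ hstep.1.2.1)
  have hT : I'.T = I.T.erase (x, y, z) := hstep.1.2.2.2.1
  have habc : (a, b, c) ∈ I'.T := by
    rw [hT]
    exact mem_erase.2 ⟨h𝒜.2.1 _ hV, hval.1.1⟩
  have hint := hval.internalT_of_step hs hstep
  have hdist := h𝒜.2.2.1 _ hV
  refine (h𝒜.imp fun _ => ValidVarV.varC23V).transport (erase_subset _ _)
    (hT ▸ erase_subset _ _) (fun W hW => ?_) (fun u hu => ?_) (fun W hW hW' u hu hu' => ?_)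
  · obtain ⟨hWV, hW⟩ := mem_erase.1 hW
    obtain ⟨-, -, hW1, hW2, -⟩ := (h𝒜.1 W hW).varC23V
    obtain ⟨-, -, h21, h22⟩ := hdist W hW (Ne.symm hWV)
    rw [hT]
    exact ⟨mem_erase.2 ⟨Ne.symm h21, hW1⟩, mem_erase.2 ⟨Ne.symm h22, hW2⟩⟩
  · by_cases hua : u = (a, b, c)
    · subst hua
      refine Or.inr ⟨hint, fun W hW => ?_⟩
      obtain ⟨hWV, hW⟩ := mem_erase.1 hW
      obtain ⟨h11, h12, -, -⟩ := hdist W hW (Ne.symm hWV)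
      exact ⟨h11, h12⟩
    · refine Or.inl fun σ hσ =>
        hval.keepsBlock_of_step hs hstep (I'.mem_Sig_of_mem_trElems hu hσ) ?_
      rintro rfl
      exact disjoint_left.1 (I'.disj_T u hu _ habc hua) hσ (by simp [trElems])
  · obtain rfl : W = ((a, b, c), x, y, z) := by
      by_contra hWV
      exact hW' (mem_erase.2 ⟨hWV, hW⟩)
    rcases hu' with rfl | rfl
    · exact hint
    · rw [hT] at hu
      exact absurd hu (notMem_erase _ _)

end Step

/-- Property 12 of the paper.
Let `(I,B)` be a valid context and `(I,B) →(d,e,f) (I',B')` a 3DT-step.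
Then the external triples of `(I',B')` can be partitioned into a set of
variables, each satisfying the two block conditions (C2)–(C3) of validity. -/
theorem stmt11 {α : Type*} [DecidableEq α] {n : ℕ} (l : ℕ)
    (I I' : TDT α n) (s s' : ℕ → ℕ)
    (hvc : ValidContext n l I s)
    (d e f : α)
    (hstep : StepB n l (d, e, f) (I, s) (I', s')) :
    ∃ 𝒜' : Finset (Var α), PartitionIntoVars n l I' s' (VarC23V n l I' s') 𝒜' := by
  obtain ⟨hs, 𝒜, h𝒜⟩ := hvc
  by_cases hint : InternalT n l I s (d, e, f)
  · exact ⟨𝒜, partitionIntoVars_of_internal_step hs (h𝒜.imp fun _ => ValidVarV.varC23V)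
      hstep hint⟩
  · obtain ⟨V, hV, hdef⟩ := h𝒜.2.2.2.2 (d, e, f) hstep.1.1 hint
    exact ⟨𝒜.erase V, partitionIntoVars_erase_of_step hs h𝒜 hV hdef hstep⟩
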